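/- Let G be a finite group, K, H ≤ G with K subconjugate to H. Then the number of W_G(K)-orbits on the set (K:G:H) = {KgH : g⁻¹Kg ⊆ H} equals the number of H-conjugacy classes of subgroups of H that are G-conjugate to K. -/

import Mathlib

lemma conj_comp {G : Type*} [Group G] (g g' : G) :
    (MulAut.conj g').toMonoidHom.comp (MulAut.conj g).toMonoidHom
      = (MulAut.conj (g' * g)).toMonoidHom := by
  ext x; simp [MulAut.conj]; group

lemma map_conj_one {G : Type*} [Group G] (A : Subgroup G) :
    Subgroup.map (MulAut.conj (1 : G)).toMonoidHom A = A := by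
  rw [map_one]; exact Subgroup.map_id A

variable {G : Type*} [Group G]

/-- Elements `g` with `g⁻¹Kg ⊆ H`, i.e. representatives of double cosets in `(K:G:H)`. -/
def Admissibles (K H : Subgroup G) : Type _ :=
  {g : G // ∀ k ∈ K, g⁻¹ * k * g ∈ H}

/-- Two admissible representatives are related iff their double cosets lie in the same
`W_G(K)`-orbit, i.e. `K(ng)H = Kg'H` for some `n ∈ N_G(K)`. -/
def weylOrbitSetoid (K H : Subgroup G) : Setoid (Admissibles K H) where
  r g g' := ∃ n ∈ (Subgroup.normalizer (K : Set G)), DoubleCoset.mk K H (n * g.1) = DoubleCoset.mk K H g'.1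
  iseqv := by
    constructor
    · exact fun g => ⟨1, (Subgroup.normalizer (K : Set G)).one_mem, by rw [one_mul]⟩
    · rintro g g' ⟨n, hn, hmk⟩
      obtain ⟨k, hk, h, hh, hEq⟩ := (DoubleCoset.eq K H (n * g.1) g'.1).mp hmk
      refine ⟨n⁻¹, (Subgroup.normalizer (K : Set G)).inv_mem hn, ?_⟩
      rw [DoubleCoset.eq]
      refine ⟨(n⁻¹ * k * n)⁻¹, K.inv_mem ?_, h⁻¹, H.inv_mem hh, ?_⟩
      · have := (Subgroup.mem_normalizer_iff.mp ((Subgroup.normalizer (K : Set G)).inv_mem hn) k).mp hk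
        rwa [inv_inv] at this
      · rw [hEq]; group
    · rintro g g' g'' ⟨n, hn, e⟩ ⟨n', hn', e'⟩
      obtain ⟨k, hk, h, hh, hEq⟩ := (DoubleCoset.eq K H (n * g.1) g'.1).mp e
      obtain ⟨k', hk', h', hh', hEq'⟩ := (DoubleCoset.eq K H (n' * g'.1) g''.1).mp e'
      refine ⟨n' * n, mul_mem hn' hn, ?_⟩
      rw [DoubleCoset.eq]
      refine ⟨k' * (n' * k * n'⁻¹), K.mul_mem hk' ((Subgroup.mem_normalizer_iff.mp hn' k).mp hk),
        h * h', H.mul_mem hh hh', ?_⟩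
      rw [hEq', hEq]; group

/-- `H`-conjugacy on the set of `G`-conjugates of `K` contained in `H`. -/
def hConjSetoid (K H : Subgroup G) :
    Setoid {L : Subgroup G //
      (∃ g : G, L = Subgroup.map (MulAut.conj g⁻¹).toMonoidHom K) ∧ L ≤ H} where
  r L L' := ∃ h ∈ H, L'.1 = Subgroup.map (MulAut.conj h⁻¹).toMonoidHom L.1
  iseqv := by
    constructor
    · exact fun L => ⟨1, H.one_mem, by rw [inv_one, map_conj_one]⟩
    · rintro L L' ⟨h, hh, e⟩
      refine ⟨h⁻¹, H.inv_mem hh, ?_⟩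
      rw [e, Subgroup.map_map, conj_comp, inv_inv, mul_inv_cancel, map_conj_one]
    · rintro L L' L'' ⟨h, hh, e⟩ ⟨h', hh', e'⟩
      refine ⟨h * h', H.mul_mem hh hh', ?_⟩
      rw [e', e, Subgroup.map_map, conj_comp, ← mul_inv_rev]

/-!
Both sides are indexed by the admissible `g` (those with `g⁻¹Kg ≤ H`), through `KgH` on one side
and through `g⁻¹Kg` on the other, and every `G`-conjugate of `K` inside `H` arises this way. Two
admissible `g, g'` are identified on either side exactly when `g h g'⁻¹ ∈ N_G(K)` for some `h ∈ H`:
for double cosets because `K ≤ N_G(K)` absorbs the left factor `K`, and for conjugates because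
`g'⁻¹Kg' = (gh)⁻¹K(gh)` says precisely that `gh g'⁻¹` normalizes `K`.
-/

theorem Quotient.map_bijective_of_surjective {α β : Sort*} {sa : Setoid α} {sb : Setoid β}
    {f : α → β} (h : ∀ a b, sa a b ↔ sb (f a) (f b)) (hf : f.Surjective) :
    (Quotient.map f fun a b => (h a b).mp).Bijective :=
  ⟨fun x y => Quotient.inductionOn₂ x y fun a b hab =>
      Quotient.sound ((h a b).mpr (Quotient.exact hab)),
    Quotient.map_surjective _ hf⟩

namespace Subgroup

theorem map_conj_eq_map_conj_iff {K : Subgroup G} {x y : G} :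
    K.map (MulAut.conj x).toMonoidHom = K.map (MulAut.conj y).toMonoidHom ↔
      y⁻¹ * x ∈ normalizer (K : Set G) := by
  have hinj := map_injective (f := (MulAut.conj y⁻¹).toMonoidHom) (MulAut.conj y⁻¹).injective
  rw [mem_normalizer_iff_map_conj_eq, ← hinj.eq_iff, map_map, map_map, conj_comp, conj_comp,
    inv_mul_cancel, map_conj_one]
  rfl

theorem map_conj_inv_le_iff {K H : Subgroup G} {g : G} :
    K.map (MulAut.conj g⁻¹).toMonoidHom ≤ H ↔ ∀ k ∈ K, g⁻¹ * k * g ∈ H := by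
  simp [SetLike.le_def, mul_assoc]

end Subgroup

open Subgroup

namespace Admissibles

variable {K H : Subgroup G}

def conjugate (g : Admissibles K H) :
    {L : Subgroup G // (∃ g : G, L = Subgroup.map (MulAut.conj g⁻¹).toMonoidHom K) ∧ L ≤ H} :=
  ⟨K.map (MulAut.conj g.1⁻¹).toMonoidHom, ⟨g.1, rfl⟩, map_conj_inv_le_iff.mpr g.2⟩

theorem conjugate_surjective : (conjugate : Admissibles K H → _).Surjective := by
  rintro ⟨L, ⟨g, rfl⟩, hL⟩
  exact ⟨⟨g, map_conj_inv_le_iff.mp hL⟩, rfl⟩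

theorem weylOrbitSetoid_iff (g g' : Admissibles K H) :
    weylOrbitSetoid K H g g' ↔ ∃ h ∈ H, g.1 * h * g'.1⁻¹ ∈ normalizer (K : Set G) := by
  constructor
  · rintro ⟨n, hn, hmk⟩
    obtain ⟨k, hk, h, hh, hg'⟩ := (DoubleCoset.eq K H (n * g.1) g'.1).mp hmk
    have hkn : (k * n)⁻¹ ∈ normalizer (K : Set G) := inv_mem (mul_mem (le_normalizer hk) hn)
    refine ⟨h, hh, ?_⟩
    convert hkn using 1
    rw [hg']
    group
  · rintro ⟨h, hh, hm⟩
    refine ⟨(g.1 * h * g'.1⁻¹)⁻¹, inv_mem hm,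
      (DoubleCoset.eq K H _ _).mpr ⟨1, K.one_mem, h, hh, ?_⟩⟩
    group

theorem hConjSetoid_conjugate_iff (g g' : Admissibles K H) :
    hConjSetoid K H g.conjugate g'.conjugate ↔
      ∃ h ∈ H, g.1 * h * g'.1⁻¹ ∈ normalizer (K : Set G) := by
  refine exists_congr fun h => and_congr_right fun _ => ?_
  rw [conjugate, conjugate, map_map, conj_comp, ← mul_inv_rev, map_conj_eq_map_conj_iff, inv_inv]

end Admissibles

theorem card_weyl_orbits_eq_card_hconj_classes_general {G : Type*} [Group G]
    (K H : Subgroup G) :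
    Nat.card (Quotient (weylOrbitSetoid K H)) =
      Nat.card (Quotient (hConjSetoid K H)) :=
  Nat.card_eq_of_bijective _ <| Quotient.map_bijective_of_surjective
    (fun g g' => (g.weylOrbitSetoid_iff g').trans (g.hConjSetoid_conjugate_iff g').symm)
    Admissibles.conjugate_surjective

/-- For `K` subconjugate to `H`, the number of `W_G(K)`-orbits on
`(K:G:H) = {KgH : g⁻¹Kg ⊆ H}` equals the number of `H`-conjugacy classes of subgroups of `H`
that are `G`-conjugate to `K`. -/
theorem card_weyl_orbits_eq_card_hconj_classes {G : Type*} [Group G] [Fintype G]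
    (K H : Subgroup G) (hsub : ∃ g : G, ∀ k ∈ K, g⁻¹ * k * g ∈ H) :
    Nat.card (Quotient (weylOrbitSetoid K H)) =
      Nat.card (Quotient (hConjSetoid K H)) :=
  card_weyl_orbits_eq_card_hconj_classes_general K H
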